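/- The function f₃(x) = x²(ψ(x) - ln(x)) + x/2 maps (0, ∞) onto (-1/12, 0): it satisfies -1/12 < f₃(x) < 0 for all x > 0, tends to 0 as x → 0⁺, and tends to -1/12 as x → ∞. -/

import Mathlib

/-!
Write `f₃(x) = x² R(x)` with `R(x) = ψ(x) - log x + 1/(2x)`. The recurrence `ψ(x+1) = ψ(x) + 1/x`
gives `R(x) - R(x+1) = log u - (u² - 1)/(2u)` with `u = 1 + 1/x`: minus the error of the
trapezoidal rule for `∫₁ᵘ dt/t`. Log-convexity of `Γ` gives `log x - 1/x ≤ ψ(x) ≤ log x`, hence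
`R(x) → 0` as `x → ∞`. Two-sided bounds on the trapezoidal error, compared with the telescoping
differences of `1/(12x²)` and `1/(3x³)`, then propagate along `x, x+1, x+2, …` and give
`-1/(12x²) < R(x) < 0`, and `R(x) ≤ 1/(3x³) - 1/(12x²)` for `x ≥ 1`. Near `0`, the same
convexity bounds applied to `ψ(x+1)` give `|f₃(x)| ≤ x/2`.
-/

open Real Filter Topology Set

noncomputable def digamma (x : ℝ) : ℝ := deriv Real.Gamma x / Real.Gamma x

noncomputable def trigamma (x : ℝ) : ℝ := deriv digamma x

lemma le_of_tendsto_of_forall_step_le {h : ℝ → ℝ} {y L : ℝ}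
    (hstep : ∀ z, y ≤ z → h (z + 1) ≤ h z) (hlim : Tendsto h atTop (𝓝 L)) : L ≤ h y := by
  have hanti : Antitone fun n : ℕ ↦ h (y + n) := antitone_nat_of_succ_le fun n ↦ by
    simpa [add_assoc] using hstep (y + n) (by simp)
  have hseq : Tendsto (fun n : ℕ ↦ h (y + n)) atTop (𝓝 L) :=
    hlim.comp (tendsto_atTop_add_const_left _ y tendsto_natCast_atTop_atTop)
  simpa using hanti.le_of_tendsto hseq 0

lemma lt_of_tendsto_of_forall_step_lt {h : ℝ → ℝ} {y L : ℝ}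
    (hstep : ∀ z, y ≤ z → h (z + 1) < h z) (hlim : Tendsto h atTop (𝓝 L)) : L < h y :=
  (le_of_tendsto_of_forall_step_le (y := y + 1) (fun z hz ↦ (hstep z (by linarith)).le)
    hlim).trans_lt (hstep y le_rfl)

lemma lt_of_hasDerivAt_lt {f g f' g' : ℝ → ℝ} {a u : ℝ}
    (hf : ∀ v, a ≤ v → HasDerivAt f (f' v) v) (hg : ∀ v, a ≤ v → HasDerivAt g (g' v) v)
    (hderiv : ∀ v, a < v → f' v < g' v) (ha : f a = g a) (hu : a < u) : f u < g u := by
  have hmono : StrictMonoOn (g - f) (Ici a) := by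
    refine strictMonoOn_of_hasDerivWithinAt_pos (convex_Ici a) (f' := g' - f')
      (fun v hv ↦ ((hg v hv).sub (hf v hv)).continuousAt.continuousWithinAt)
      (fun v hv ↦ ?_) (fun v hv ↦ ?_)
    all_goals rw [interior_Ici] at hv
    · exact ((hg v hv.le).sub (hf v hv.le)).hasDerivWithinAt
    · exact sub_pos.2 (hderiv v hv)
  simpa [ha] using hmono self_mem_Ici hu.le hu

lemma hasDerivAt_trapezoid {v : ℝ} (hv : v ≠ 0) :
    HasDerivAt (fun u ↦ (u ^ 2 - 1) / (2 * u)) ((v ^ 2 + 1) / (2 * v ^ 2)) v := by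
  have h := ((hasDerivAt_pow 2 v).sub_const 1).div ((hasDerivAt_id v).const_mul 2)
    (by simpa using hv)
  refine h.congr_deriv ?_
  simp only [id]
  field_simp
  ring

-- `(u + 1)(u - 1)³/(12u²)` is the leading term of the trapezoidal error `(u² - 1)/(2u) - log u`
-- as `u → 1`.
lemma hasDerivAt_trapezoidCorrection {v : ℝ} (hv : v ≠ 0) :
    HasDerivAt (fun u ↦ (u + 1) * (u - 1) ^ 3 / (12 * u ^ 2))
      ((v - 1) ^ 2 * (v ^ 2 + v + 1) / (6 * v ^ 3)) v := by
  have h := (((hasDerivAt_id v).add_const 1).mul (((hasDerivAt_id v).sub_const 1).pow 3)).div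
    ((hasDerivAt_pow 2 v).const_mul 12) (by simpa using hv)
  refine h.congr_deriv ?_
  simp only [id, Pi.pow_apply, Pi.mul_apply]
  field_simp
  ring

lemma log_lt_trapezoid {u : ℝ} (hu : 1 < u) : log u < (u ^ 2 - 1) / (2 * u) := by
  refine lt_of_hasDerivAt_lt (fun v hv ↦ hasDerivAt_log (by positivity))
    (fun v hv ↦ hasDerivAt_trapezoid (by positivity)) (fun v hv ↦ ?_) (by simp) hu
  rw [inv_eq_one_div, div_lt_div_iff₀ (by positivity) (by positivity)]
  nlinarith [mul_pos (by linarith : (0 : ℝ) < v) (pow_pos (by linarith : (0 : ℝ) < v - 1) 2)]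

lemma trapezoid_sub_correction_lt_log {u : ℝ} (hu : 1 < u) :
    (u ^ 2 - 1) / (2 * u) - (u + 1) * (u - 1) ^ 3 / (12 * u ^ 2) < log u := by
  refine lt_of_hasDerivAt_lt
    (fun v hv ↦ (hasDerivAt_trapezoid (by positivity)).sub
      (hasDerivAt_trapezoidCorrection (by positivity)))
    (fun v hv ↦ hasDerivAt_log (by positivity)) (fun v hv ↦ ?_) (by simp) hu
  have : 0 < (v - 1) ^ 4 / (6 * v ^ 3) := by
    have : 0 < v - 1 := by linarith
    positivity
  have h : (v - 1) ^ 4 / (6 * v ^ 3) =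
      v⁻¹ - ((v ^ 2 + 1) / (2 * v ^ 2) - (v - 1) ^ 2 * (v ^ 2 + v + 1) / (6 * v ^ 3)) := by
    field_simp
    ring
  linarith

lemma log_lt_trapezoid_sub_correction_add {u : ℝ} (hu : 1 < u) :
    log u < (u ^ 2 - 1) / (2 * u) - (u + 1) * (u - 1) ^ 3 / (12 * u ^ 2) + (u - 1) ^ 5 / 6 := by
  refine lt_of_hasDerivAt_lt (fun v hv ↦ hasDerivAt_log (by positivity))
    (fun v hv ↦ ((hasDerivAt_trapezoid (by positivity)).sub
      (hasDerivAt_trapezoidCorrection (by positivity))).add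
      ((((hasDerivAt_id v).sub_const 1).pow 5).div_const 6)) (fun v hv ↦ ?_) (by simp) hu
  simp only [id, Nat.cast_ofNat, mul_one]
  have : 0 < (v - 1) ^ 4 * (5 * v ^ 3 - 1) / (6 * v ^ 3) := by
    have : 0 < v - 1 := by linarith
    have : 0 < 5 * v ^ 3 - 1 := by nlinarith [one_lt_pow₀ hv (n := 3) (by norm_num)]
    positivity
  have h : (v - 1) ^ 4 * (5 * v ^ 3 - 1) / (6 * v ^ 3) =
      (v ^ 2 + 1) / (2 * v ^ 2) - (v - 1) ^ 2 * (v ^ 2 + v + 1) / (6 * v ^ 3)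
        + 5 * (v - 1) ^ 4 / 6 - v⁻¹ := by
    field_simp
    ring
  linarith

lemma differentiableAt_Gamma_of_pos {x : ℝ} (hx : 0 < x) : DifferentiableAt ℝ Gamma x :=
  differentiableOn_Gamma_Ioi.differentiableAt (Ioi_mem_nhds hx)

lemma differentiableAt_log_Gamma {x : ℝ} (hx : 0 < x) : DifferentiableAt ℝ (log ∘ Gamma) x :=
  (differentiableAt_Gamma_of_pos hx).log (Gamma_pos_of_pos hx).ne'

lemma digamma_eq_deriv_log_Gamma {x : ℝ} (hx : 0 < x) : digamma x = deriv (log ∘ Gamma) x := by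
  rw [digamma, Function.comp_def,
    deriv.log (differentiableAt_Gamma_of_pos hx) (Gamma_pos_of_pos hx).ne']

lemma digamma_add_one {x : ℝ} (hx : 0 < x) : digamma (x + 1) = digamma x + 1 / x := by
  have hrec : (fun y ↦ (log ∘ Gamma) (y + 1)) =ᶠ[𝓝 x] fun y ↦ (log ∘ Gamma) y + log y := by
    filter_upwards [eventually_gt_nhds hx] with y hy
    simp only [Function.comp_apply, Gamma_add_one hy.ne',
      log_mul hy.ne' (Gamma_pos_of_pos hy).ne', add_comm]
  rw [digamma_eq_deriv_log_Gamma (by linarith), digamma_eq_deriv_log_Gamma hx, one_div,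
    ← deriv_log, ← deriv_comp_add_const, hrec.deriv_eq,
    deriv_fun_add (differentiableAt_log_Gamma hx) (differentiableAt_log hx.ne')]

lemma slope_log_Gamma {x : ℝ} (hx : 0 < x) : slope (log ∘ Gamma) x (x + 1) = log x := by
  rw [slope_def_field, add_sub_cancel_left, div_one, Function.comp_apply, Function.comp_apply,
    Gamma_add_one hx.ne', log_mul hx.ne' (Gamma_pos_of_pos hx).ne', add_sub_cancel_right]

lemma digamma_le_log {x : ℝ} (hx : 0 < x) : digamma x ≤ log x := by
  rw [digamma_eq_deriv_log_Gamma hx, ← slope_log_Gamma hx]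
  exact convexOn_log_Gamma.deriv_le_slope hx (by simp; linarith) (by linarith)
    (differentiableAt_log_Gamma hx)

lemma log_le_digamma_add_one {x : ℝ} (hx : 0 < x) : log x ≤ digamma (x + 1) := by
  rw [digamma_eq_deriv_log_Gamma (by linarith), ← slope_log_Gamma hx]
  exact convexOn_log_Gamma.slope_le_deriv hx (by simp; linarith) (by linarith)
    (differentiableAt_log_Gamma (by linarith))

lemma digamma_sub_log_nonpos {x : ℝ} (hx : 0 < x) : digamma x - log x ≤ 0 :=
  sub_nonpos.2 (digamma_le_log hx)

lemma neg_inv_le_digamma_sub_log {x : ℝ} (hx : 0 < x) : -(1 / x) ≤ digamma x - log x := by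
  linarith [log_le_digamma_add_one hx, digamma_add_one hx]

noncomputable def digammaRemainder (x : ℝ) : ℝ := digamma x - log x + 1 / (2 * x)

lemma tendsto_digammaRemainder_atTop : Tendsto digammaRemainder atTop (𝓝 0) := by
  have hinv : Tendsto (fun x : ℝ ↦ 1 / (2 * x)) atTop (𝓝 0) :=
    tendsto_const_nhds.div_atTop (tendsto_id.const_mul_atTop two_pos)
  refine tendsto_of_tendsto_of_tendsto_of_le_of_le' (by simpa only [neg_zero] using hinv.neg)
    hinv ?_ ?_
  all_goals filter_upwards [eventually_gt_atTop 0] with x hx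
  all_goals rw [digammaRemainder]
  · have : 1 / x = 2 * (1 / (2 * x)) := by field_simp
    linarith [neg_inv_le_digamma_sub_log hx]
  · linarith [digamma_sub_log_nonpos hx]

lemma digammaRemainder_sub_add_one {x : ℝ} (hx : 0 < x) :
    digammaRemainder x - digammaRemainder (x + 1) =
      log ((x + 1) / x) - (((x + 1) / x) ^ 2 - 1) / (2 * ((x + 1) / x)) := by
  rw [digammaRemainder, digammaRemainder, digamma_add_one hx, log_div (by positivity) hx.ne']
  field_simp
  ring

lemma one_lt_add_one_div_self {x : ℝ} (hx : 0 < x) : 1 < (x + 1) / x := by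
  rw [one_lt_div hx]; linarith

lemma digammaRemainder_neg {x : ℝ} (hx : 0 < x) : digammaRemainder x < 0 := by
  refine neg_pos.1 (lt_of_tendsto_of_forall_step_lt (h := fun y ↦ -digammaRemainder y)
    (fun z hz ↦ ?_) (by simpa using tendsto_digammaRemainder_atTop.neg))
  have := digammaRemainder_sub_add_one (hx.trans_le hz)
  linarith [log_lt_trapezoid (one_lt_add_one_div_self (hx.trans_le hz))]

lemma tendsto_one_div_const_mul_pow_atTop {c : ℝ} (hc : 0 < c) {n : ℕ} (hn : n ≠ 0) :
    Tendsto (fun x : ℝ ↦ 1 / (c * x ^ n)) atTop (𝓝 0) :=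
  tendsto_const_nhds.div_atTop ((tendsto_pow_atTop hn).const_mul_atTop hc)

lemma inv_sq_sub_inv_add_one_sq {x : ℝ} (hx : 0 < x) :
    1 / (12 * x ^ 2) - 1 / (12 * (x + 1) ^ 2) =
      ((x + 1) / x + 1) * ((x + 1) / x - 1) ^ 3 / (12 * ((x + 1) / x) ^ 2) := by
  field_simp
  ring

lemma neg_inv_sq_div_lt_digammaRemainder {x : ℝ} (hx : 0 < x) :
    -(1 / (12 * x ^ 2)) < digammaRemainder x := by
  have hlim : Tendsto (fun y ↦ digammaRemainder y + 1 / (12 * y ^ 2)) atTop (𝓝 0) := by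
    simpa only [add_zero] using tendsto_digammaRemainder_atTop.add
      (tendsto_one_div_const_mul_pow_atTop (by norm_num) two_ne_zero)
  refine neg_lt_iff_pos_add.2 (lt_of_tendsto_of_forall_step_lt (y := x) (fun z hz ↦ ?_) hlim)
  have hz0 : 0 < z := hx.trans_le hz
  linarith [digammaRemainder_sub_add_one hz0, inv_sq_sub_inv_add_one_sq hz0,
    trapezoid_sub_correction_lt_log (one_lt_add_one_div_self hz0)]

lemma digammaRemainder_le {x : ℝ} (hx : 1 ≤ x) :
    digammaRemainder x ≤ 1 / (3 * x ^ 3) - 1 / (12 * x ^ 2) := by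
  have hlim : Tendsto (fun y ↦ 1 / (3 * y ^ 3) - 1 / (12 * y ^ 2) - digammaRemainder y)
      atTop (𝓝 0) := by
    simpa only [sub_zero] using ((tendsto_one_div_const_mul_pow_atTop (by norm_num)
      three_ne_zero).sub (tendsto_one_div_const_mul_pow_atTop (by norm_num) two_ne_zero)).sub
      tendsto_digammaRemainder_atTop
  refine sub_nonneg.1 (le_of_tendsto_of_forall_step_le (y := x) (fun z hz ↦ ?_) hlim)
  have hz0 : 0 < z := by linarith
  have hquint : 1 / (3 * z ^ 3) - 1 / (3 * (z + 1) ^ 3) - ((z + 1) / z - 1) ^ 5 / 6 =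
      (6 * z ^ 4 + 5 * z ^ 3 - z ^ 2 - 3 * z - 1) / (6 * z ^ 5 * (z + 1) ^ 3) := by
    field_simp
    ring
  have hnum : 0 ≤ (6 * z ^ 4 + 5 * z ^ 3 - z ^ 2 - 3 * z - 1) / (6 * z ^ 5 * (z + 1) ^ 3) := by
    have : 1 ≤ z ^ 2 := one_le_pow₀ (hx.trans hz)
    apply div_nonneg _ (by positivity)
    nlinarith
  linarith [digammaRemainder_sub_add_one hz0, inv_sq_sub_inv_add_one_sq hz0,
    log_lt_trapezoid_sub_correction_add (one_lt_add_one_div_self hz0)]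

noncomputable def f3 (x : ℝ) : ℝ := x ^ 2 * (digamma x - log x) + x / 2

lemma f3_eq_sq_mul_digammaRemainder {x : ℝ} (hx : x ≠ 0) : f3 x = x ^ 2 * digammaRemainder x := by
  rw [f3, digammaRemainder]
  field_simp

lemma neg_one_div_twelve_lt_f3 {x : ℝ} (hx : 0 < x) : -1 / 12 < f3 x := by
  have := mul_lt_mul_of_pos_left (neg_inv_sq_div_lt_digammaRemainder hx) (by positivity : 0 < x ^ 2)
  rw [f3_eq_sq_mul_digammaRemainder hx.ne']
  field_simp at this ⊢
  linarith

lemma f3_neg {x : ℝ} (hx : 0 < x) : f3 x < 0 := by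
  rw [f3_eq_sq_mul_digammaRemainder hx.ne']
  exact mul_neg_of_pos_of_neg (by positivity) (digammaRemainder_neg hx)

lemma f3_le {x : ℝ} (hx : 1 ≤ x) : f3 x ≤ -1 / 12 + 1 / (3 * x) := by
  have hx0 : 0 < x := by linarith
  have := mul_le_mul_of_nonneg_left (digammaRemainder_le hx) (by positivity : 0 ≤ x ^ 2)
  have hsimp : x ^ 2 * (1 / (3 * x ^ 3) - 1 / (12 * x ^ 2)) = -1 / 12 + 1 / (3 * x) := by
    field_simp
    ring
  rwa [f3_eq_sq_mul_digammaRemainder hx0.ne', ← hsimp]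

lemma abs_f3_le {x : ℝ} (hx : 0 < x) : |f3 x| ≤ x / 2 := by
  have hlow := log_le_digamma_add_one hx
  have hup : digamma (x + 1) - log x ≤ 1 / x := by
    have := log_le_sub_one_of_pos (by positivity : 0 < (x + 1) / x)
    rw [log_div (by positivity) hx.ne'] at this
    have hsub : (x + 1) / x - 1 = 1 / x := by field_simp; ring
    linarith [digamma_le_log (by linarith : 0 < x + 1)]
  have hf3 : f3 x = x ^ 2 * (digamma (x + 1) - log x) - x / 2 := by
    rw [f3, digamma_add_one hx]
    field_simp
    ring
  have h1 := mul_le_mul_of_nonneg_left hup (by positivity : 0 ≤ x ^ 2)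
  have h2 : x ^ 2 * (1 / x) = x := by field_simp
  rw [abs_le, hf3]
  constructor <;> nlinarith [mul_nonneg (by positivity : 0 ≤ x ^ 2) (sub_nonneg.2 hlow)]

lemma tendsto_f3_nhdsGT_zero : Tendsto f3 (𝓝[>] 0) (𝓝 0) := by
  have hx : Tendsto (fun x : ℝ ↦ x / 2) (𝓝[>] 0) (𝓝 0) := by
    simpa using (continuous_id.div_const (2 : ℝ)).continuousAt.tendsto.mono_left
      (nhdsWithin_le_nhds (a := (0 : ℝ)))
  exact squeeze_zero_norm' (eventually_nhdsWithin_of_forall fun x hx ↦ abs_f3_le hx) hx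

lemma tendsto_f3_atTop : Tendsto f3 atTop (𝓝 (-1 / 12)) := by
  have hup : Tendsto (fun x : ℝ ↦ -1 / 12 + 1 / (3 * x)) atTop (𝓝 (-1 / 12)) := by
    simpa using tendsto_const_nhds.add (tendsto_one_div_const_mul_pow_atTop (c := 3)
      (by norm_num) one_ne_zero)
  refine tendsto_of_tendsto_of_tendsto_of_le_of_le' tendsto_const_nhds hup ?_ ?_
  · filter_upwards [eventually_gt_atTop 0] with x hx using (neg_one_div_twelve_lt_f3 hx).le
  · filter_upwards [eventually_ge_atTop 1] with x hx using f3_le hx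

theorem f3_range :
    (∀ x : ℝ, 0 < x →
      -1/12 < x ^ 2 * (digamma x - Real.log x) + x / 2 ∧
      x ^ 2 * (digamma x - Real.log x) + x / 2 < 0) ∧
    Tendsto (fun x : ℝ => x ^ 2 * (digamma x - Real.log x) + x / 2)
      (𝓝[>] 0) (𝓝 0) ∧
    Tendsto (fun x : ℝ => x ^ 2 * (digamma x - Real.log x) + x / 2)
      atTop (𝓝 (-1/12)) :=
  ⟨fun _ hx ↦ ⟨neg_one_div_twelve_lt_f3 hx, f3_neg hx⟩, tendsto_f3_nhdsGT_zero, tendsto_f3_atTop⟩
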